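/- Let 1 ≤ n < d, 0 < s < 1, and let L := {x ∈ ℝ^d \ {0} : |x_V| ≤ s|x_H|} be the cone of slope s about the horizontal n-plane. Then the map Υ(x) := (|x|/|x_H|) x_H + x_V is a bilipschitz homeomorphism from L onto the cone L' := {x ∈ ℝ^d \ {0} : |x_V| ≤ s(1+s^2)^{-1/2} |x_H|}, with inverse Υ^{-1}(x) = (1 − |x_V|^2/|x_H|^2)^{1/2} x_H + x_V, and the Lipschitz constants of Υ and Υ^{-1} depend only on n, d, and s. -/

import Mathlib

/-- Projection of `x ∈ ℝ^d` onto the first `n` coordinates (viewed inside `ℝ^d`). -/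
noncomputable def horiz (n d : ℕ) (x : EuclideanSpace ℝ (Fin d)) : EuclideanSpace ℝ (Fin d) :=
  (WithLp.equiv 2 (Fin d → ℝ)).symm (fun i => if (i : ℕ) < n then x i else 0)

/-- Projection of `x ∈ ℝ^d` onto the last `d - n` coordinates (viewed inside `ℝ^d`). -/
noncomputable def vert (n d : ℕ) (x : EuclideanSpace ℝ (Fin d)) : EuclideanSpace ℝ (Fin d) :=
  (WithLp.equiv 2 (Fin d → ℝ)).symm (fun i => if (i : ℕ) < n then 0 else x i)

/-- The map `Υ(x) := (|x|/|x_H|)·x_H + x_V`. -/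
noncomputable def ups (n d : ℕ) (x : EuclideanSpace ℝ (Fin d)) : EuclideanSpace ℝ (Fin d) :=
  (‖x‖ / ‖horiz n d x‖) • horiz n d x + vert n d x

/-- The map `Υ⁻¹(x) := (1 − |x_V|²/|x_H|²)^{1/2}·x_H + x_V`. -/
noncomputable def upsInv (n d : ℕ) (x : EuclideanSpace ℝ (Fin d)) : EuclideanSpace ℝ (Fin d) :=
  Real.sqrt (1 - ‖vert n d x‖ ^ 2 / ‖horiz n d x‖ ^ 2) • horiz n d x + vert n d x

/-!
Both maps have the form `x ↦ (g x / |x_H|) • x_H + x_V`, with `g x = |x|` for `Υ` and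
`g y = (|y_H|² - |y_V|²)^{1/2}` for `Υ⁻¹`. They fix `x_V` and exchange `|x_H|` with `|x|`, so
the condition `|x_V|² ≤ s²|x_H|²` defining `L` becomes `(1 + s²)|y_V|² ≤ s²|y_H|²`, which
defines `L'`. A map of this form is Lipschitz on a cone as soon as `g` is Lipschitz there and
`g ≤ M |x_H|`. For `Υ⁻¹` the square root is Lipschitz because `s < 1` gives
`2|y_V|² ≤ |y_H|²` on `L'`, keeping the radicand comparable to `|y_H|²`.
-/

lemma norm_smul_add_sub_smul_add_le {E : Type*} [SeminormedAddCommGroup E] [NormedSpace ℝ E]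
    (a b : ℝ) (h₁ h₂ v₁ v₂ : E) :
    ‖(a • h₁ + v₁) - (b • h₂ + v₂)‖ ≤ |a| * ‖h₁ - h₂‖ + |a - b| * ‖h₂‖ + ‖v₁ - v₂‖ := by
  calc ‖(a • h₁ + v₁) - (b • h₂ + v₂)‖ = ‖a • (h₁ - h₂) + (a - b) • h₂ + (v₁ - v₂)‖ := by
        congr 1; module
    _ ≤ ‖a • (h₁ - h₂)‖ + ‖(a - b) • h₂‖ + ‖v₁ - v₂‖ := norm_add₃_le
    _ = _ := by rw [norm_smul, norm_smul, Real.norm_eq_abs, Real.norm_eq_abs]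

lemma abs_div_sub_div_mul_le {g₁ g₂ h₁ h₂ M : ℝ} (hh₁ : 0 < h₁) (hh₂ : 0 < h₂)
    (hg₁ : 0 ≤ g₁) (hgM : g₁ ≤ M * h₁) :
    |g₁ / h₁ - g₂ / h₂| * h₂ ≤ M * |h₁ - h₂| + |g₁ - g₂| := by
  have hsplit : (g₁ / h₁ - g₂ / h₂) * h₂ = g₁ / h₁ * (h₂ - h₁) + (g₁ - g₂) := by
    field_simp; ring
  have hq : g₁ / h₁ ≤ M := (div_le_iff₀ hh₁).2 hgM
  calc |g₁ / h₁ - g₂ / h₂| * h₂ = |g₁ / h₁ * (h₂ - h₁) + (g₁ - g₂)| := by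
        rw [← hsplit, abs_mul, abs_of_pos hh₂]
    _ ≤ g₁ / h₁ * |h₂ - h₁| + |g₁ - g₂| := by
        grw [abs_add_le, abs_mul, abs_of_nonneg (by positivity : 0 ≤ g₁ / h₁)]
    _ ≤ M * |h₁ - h₂| + |g₁ - g₂| := by rw [abs_sub_comm]; gcongr

lemma abs_sqrt_sq_sub_sq_sub_le {h₁ h₂ v₁ v₂ D : ℝ} (hh₁ : 0 < h₁) (hh₂ : 0 < h₂)
    (hv₁ : 0 ≤ v₁) (hv₂ : 0 ≤ v₂) (hvh₁ : 2 * v₁ ^ 2 ≤ h₁ ^ 2) (hvh₂ : 2 * v₂ ^ 2 ≤ h₂ ^ 2)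
    (hDh : |h₁ - h₂| ≤ D) (hDv : |v₁ - v₂| ≤ D) :
    |√(h₁ ^ 2 - v₁ ^ 2) - √(h₂ ^ 2 - v₂ ^ 2)| ≤ 4 * D := by
  set a₁ := √(h₁ ^ 2 - v₁ ^ 2)
  set a₂ := √(h₂ ^ 2 - v₂ ^ 2)
  have ha₁ : a₁ ^ 2 = h₁ ^ 2 - v₁ ^ 2 := Real.sq_sqrt (by nlinarith)
  have ha₂ : a₂ ^ 2 = h₂ ^ 2 - v₂ ^ 2 := Real.sq_sqrt (by nlinarith)
  have hlb₁ : h₁ / 2 ≤ a₁ := Real.le_sqrt_of_sq_le (by nlinarith)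
  have hlb₂ : h₂ / 2 ≤ a₂ := Real.le_sqrt_of_sq_le (by nlinarith)
  have hD : 0 ≤ D := (abs_nonneg _).trans hDh
  have hvh₁' : v₁ ≤ h₁ := le_of_sq_le_sq (by nlinarith) hh₁.le
  have hvh₂' : v₂ ≤ h₂ := le_of_sq_le_sq (by nlinarith) hh₂.le
  have hsq : |a₁ - a₂| * (a₁ + a₂) ≤ 4 * D * (a₁ + a₂) := by
    calc |a₁ - a₂| * (a₁ + a₂) = |(h₁ - h₂) * (h₁ + h₂) - (v₁ - v₂) * (v₁ + v₂)| := by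
          rw [← abs_of_pos (by linarith : 0 < a₁ + a₂), ← abs_mul]
          congr 1; linear_combination ha₁ - ha₂
      _ ≤ |h₁ - h₂| * (h₁ + h₂) + |v₁ - v₂| * (v₁ + v₂) := by
          grw [abs_sub, abs_mul, abs_mul, abs_of_pos (by linarith : 0 < h₁ + h₂),
            abs_of_nonneg (by linarith : 0 ≤ v₁ + v₂)]
      _ ≤ D * (h₁ + h₂) + D * (h₁ + h₂) := by gcongr
      _ ≤ 4 * D * (a₁ + a₂) := by nlinarith
  exact le_of_mul_le_mul_right hsq (by linarith)

section Projections

variable {n d : ℕ}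

lemma horiz_apply (x : EuclideanSpace ℝ (Fin d)) (i : Fin d) :
    horiz n d x i = if (i : ℕ) < n then x i else 0 := rfl

lemma vert_apply (x : EuclideanSpace ℝ (Fin d)) (i : Fin d) :
    vert n d x i = if (i : ℕ) < n then 0 else x i := rfl

lemma horiz_add_vert (x : EuclideanSpace ℝ (Fin d)) : horiz n d x + vert n d x = x := by
  ext i; simp only [horiz_apply, vert_apply, PiLp.add_apply]; split_ifs <;> simp

lemma horiz_sub (x y : EuclideanSpace ℝ (Fin d)) :
    horiz n d (x - y) = horiz n d x - horiz n d y := by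
  ext i; simp only [horiz_apply, PiLp.sub_apply]; split_ifs <;> simp

lemma vert_sub (x y : EuclideanSpace ℝ (Fin d)) :
    vert n d (x - y) = vert n d x - vert n d y := by
  ext i; simp only [vert_apply, PiLp.sub_apply]; split_ifs <;> simp

lemma horiz_smul_horiz_add_vert (c : ℝ) (x y : EuclideanSpace ℝ (Fin d)) :
    horiz n d (c • horiz n d x + vert n d y) = c • horiz n d x := by
  ext i; simp only [horiz_apply, vert_apply, PiLp.add_apply, PiLp.smul_apply]; split_ifs <;> simp

lemma vert_smul_horiz_add_vert (c : ℝ) (x y : EuclideanSpace ℝ (Fin d)) :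
    vert n d (c • horiz n d x + vert n d y) = vert n d y := by
  ext i; simp only [horiz_apply, vert_apply, PiLp.add_apply, PiLp.smul_apply]; split_ifs <;> simp

lemma norm_sq_eq_norm_horiz_sq_add_norm_vert_sq (x : EuclideanSpace ℝ (Fin d)) :
    ‖x‖ ^ 2 = ‖horiz n d x‖ ^ 2 + ‖vert n d x‖ ^ 2 := by
  simp only [EuclideanSpace.norm_sq_eq, ← Finset.sum_add_distrib, horiz_apply, vert_apply]
  congr 1; ext i; split_ifs <;> simp

lemma norm_horiz_le (x : EuclideanSpace ℝ (Fin d)) : ‖horiz n d x‖ ≤ ‖x‖ :=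
  le_of_sq_le_sq (by nlinarith [norm_sq_eq_norm_horiz_sq_add_norm_vert_sq (n := n) x])
    (norm_nonneg _)

lemma norm_vert_le (x : EuclideanSpace ℝ (Fin d)) : ‖vert n d x‖ ≤ ‖x‖ :=
  le_of_sq_le_sq (by nlinarith [norm_sq_eq_norm_horiz_sq_add_norm_vert_sq (n := n) x])
    (norm_nonneg _)

lemma norm_horiz_sub_le (x y : EuclideanSpace ℝ (Fin d)) :
    ‖horiz n d x - horiz n d y‖ ≤ ‖x - y‖ :=
  horiz_sub (n := n) x y ▸ norm_horiz_le _

lemma norm_vert_sub_le (x y : EuclideanSpace ℝ (Fin d)) :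
    ‖vert n d x - vert n d y‖ ≤ ‖x - y‖ :=
  vert_sub (n := n) x y ▸ norm_vert_le _

lemma ne_zero_of_norm_horiz_pos {x : EuclideanSpace ℝ (Fin d)} (hx : 0 < ‖horiz n d x‖) :
    x ≠ 0 :=
  norm_pos_iff.1 (hx.trans_le (norm_horiz_le x))

end Projections

def cone (n d : ℕ) (c : ℝ) : Set (EuclideanSpace ℝ (Fin d)) :=
  {x | x ≠ 0 ∧ ‖vert n d x‖ ≤ c * ‖horiz n d x‖}

lemma sq_mul_one_add_sq_rpow_neg_half (s : ℝ) :
    (s * (1 + s ^ 2) ^ (-(1 : ℝ) / 2)) ^ 2 = s ^ 2 / (1 + s ^ 2) := by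
  rw [mul_pow, ← Real.rpow_mul_natCast (by positivity)]
  norm_num [Real.rpow_neg_one, div_eq_mul_inv]

section Cone

variable {n d : ℕ} {x y : EuclideanSpace ℝ (Fin d)}

lemma norm_horiz_pos_of_mem_cone {c : ℝ} (hx : x ∈ cone n d c) : 0 < ‖horiz n d x‖ := by
  obtain ⟨hx0, hxc⟩ := hx
  refine (norm_nonneg _).lt_of_ne' fun hH => hx0 ?_
  have hV : ‖vert n d x‖ = 0 := le_antisymm (by simpa [hH] using hxc) (norm_nonneg _)
  rw [← horiz_add_vert (n := n) x, norm_eq_zero.1 hH, norm_eq_zero.1 hV, add_zero]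

lemma mem_cone_iff_sq {c : ℝ} (hc : 0 ≤ c) :
    x ∈ cone n d c ↔ x ≠ 0 ∧ ‖vert n d x‖ ^ 2 ≤ c ^ 2 * ‖horiz n d x‖ ^ 2 := by
  rw [← mul_pow]
  exact and_congr_right' (pow_le_pow_iff_left₀ (norm_nonneg _) (by positivity) two_ne_zero).symm

lemma mem_cone_rpow_iff {s : ℝ} (hs : 0 ≤ s) :
    x ∈ cone n d (s * (1 + s ^ 2) ^ (-(1 : ℝ) / 2)) ↔
      x ≠ 0 ∧ (1 + s ^ 2) * ‖vert n d x‖ ^ 2 ≤ s ^ 2 * ‖horiz n d x‖ ^ 2 := by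
  rw [mem_cone_iff_sq (by positivity), sq_mul_one_add_sq_rpow_neg_half, div_mul_eq_mul_div,
    le_div_iff₀ (by positivity), mul_comm]

lemma norm_vert_lt_of_mem_cone_rpow {s : ℝ} (hs : 0 ≤ s)
    (hy : y ∈ cone n d (s * (1 + s ^ 2) ^ (-(1 : ℝ) / 2))) : ‖vert n d y‖ < ‖horiz n d y‖ := by
  have hH := norm_horiz_pos_of_mem_cone hy
  have hVH := ((mem_cone_rpow_iff hs).1 hy).2
  exact lt_of_pow_lt_pow_left₀ 2 hH.le (by nlinarith)

end Cone

section Maps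

variable {n d : ℕ} {x y : EuclideanSpace ℝ (Fin d)}

lemma vert_ups : vert n d (ups n d x) = vert n d x :=
  vert_smul_horiz_add_vert _ _ _

lemma norm_horiz_ups (hx : 0 < ‖horiz n d x‖) : ‖horiz n d (ups n d x)‖ = ‖x‖ := by
  rw [ups, horiz_smul_horiz_add_vert, norm_smul, Real.norm_eq_abs, abs_of_nonneg (by positivity),
    div_mul_cancel₀ _ hx.ne']

lemma upsInv_eq (hy : 0 < ‖horiz n d y‖) :
    upsInv n d y =
      (√(‖horiz n d y‖ ^ 2 - ‖vert n d y‖ ^ 2) / ‖horiz n d y‖) • horiz n d y + vert n d y := by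
  rw [upsInv, one_sub_div (pow_ne_zero 2 hy.ne'), Real.sqrt_div' _ (sq_nonneg _),
    Real.sqrt_sq hy.le]

lemma vert_upsInv (hy : 0 < ‖horiz n d y‖) : vert n d (upsInv n d y) = vert n d y := by
  rw [upsInv_eq hy, vert_smul_horiz_add_vert]

lemma norm_horiz_upsInv (hy : 0 < ‖horiz n d y‖) :
    ‖horiz n d (upsInv n d y)‖ = √(‖horiz n d y‖ ^ 2 - ‖vert n d y‖ ^ 2) := by
  rw [upsInv_eq hy, horiz_smul_horiz_add_vert, norm_smul, Real.norm_eq_abs,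
    abs_of_nonneg (by positivity), div_mul_cancel₀ _ hy.ne']

lemma upsInv_ups (hx : 0 < ‖horiz n d x‖) : upsInv n d (ups n d x) = x := by
  have hX : 0 < ‖horiz n d (ups n d x)‖ := norm_horiz_ups hx ▸ hx.trans_le (norm_horiz_le x)
  have hsqrt : √(‖x‖ ^ 2 - ‖vert n d x‖ ^ 2) = ‖horiz n d x‖ := by
    rw [norm_sq_eq_norm_horiz_sq_add_norm_vert_sq (n := n), add_sub_cancel_right,
      Real.sqrt_sq (norm_nonneg _)]
  have hcoeff : ‖horiz n d x‖ / ‖x‖ * (‖x‖ / ‖horiz n d x‖) = 1 := by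
    field_simp [hx.ne', (norm_pos_iff.2 (ne_zero_of_norm_horiz_pos hx)).ne']
  rw [upsInv_eq hX, norm_horiz_ups hx, vert_ups, hsqrt, ups, horiz_smul_horiz_add_vert, smul_smul,
    hcoeff, one_smul, horiz_add_vert]

lemma ups_upsInv (hy : ‖vert n d y‖ < ‖horiz n d y‖) : ups n d (upsInv n d y) = y := by
  have hH : 0 < ‖horiz n d y‖ := (norm_nonneg _).trans_lt hy
  set a := √(‖horiz n d y‖ ^ 2 - ‖vert n d y‖ ^ 2)
  have ha : 0 < a := Real.sqrt_pos.2 (by nlinarith [norm_nonneg (vert n d y)])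
  have hnorm : ‖upsInv n d y‖ = ‖horiz n d y‖ := by
    have : ‖upsInv n d y‖ ^ 2 = ‖horiz n d y‖ ^ 2 := by
      rw [norm_sq_eq_norm_horiz_sq_add_norm_vert_sq (n := n), norm_horiz_upsInv hH,
        vert_upsInv hH, Real.sq_sqrt (by nlinarith [norm_nonneg (vert n d y)])]
      ring
    exact (pow_left_inj₀ (norm_nonneg _) (norm_nonneg _) two_ne_zero).1 this
  have hcoeff : ‖horiz n d y‖ / a * (a / ‖horiz n d y‖) = 1 := by
    field_simp [ha.ne', hH.ne']
  rw [ups, hnorm, norm_horiz_upsInv hH, vert_upsInv hH, upsInv_eq hH, horiz_smul_horiz_add_vert,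
    smul_smul, hcoeff, one_smul, horiz_add_vert]

end Maps

section Image

variable {n d : ℕ} {s : ℝ}

lemma ups_mem_cone (hs : 0 ≤ s) {x : EuclideanSpace ℝ (Fin d)} (hx : x ∈ cone n d s) :
    ups n d x ∈ cone n d (s * (1 + s ^ 2) ^ (-(1 : ℝ) / 2)) := by
  have hH := norm_horiz_pos_of_mem_cone hx
  have hVH := ((mem_cone_iff_sq hs).1 hx).2
  have hX : 0 < ‖horiz n d (ups n d x)‖ := norm_horiz_ups hH ▸ hH.trans_le (norm_horiz_le x)
  refine (mem_cone_rpow_iff hs).2 ⟨ne_zero_of_norm_horiz_pos hX, ?_⟩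
  rw [vert_ups, norm_horiz_ups hH, norm_sq_eq_norm_horiz_sq_add_norm_vert_sq (n := n) x]
  linarith

lemma upsInv_mem_cone (hs : 0 ≤ s) {y : EuclideanSpace ℝ (Fin d)}
    (hy : y ∈ cone n d (s * (1 + s ^ 2) ^ (-(1 : ℝ) / 2))) : upsInv n d y ∈ cone n d s := by
  have hH := norm_horiz_pos_of_mem_cone hy
  have hVH := ((mem_cone_rpow_iff hs).1 hy).2
  have hlt := norm_vert_lt_of_mem_cone_rpow hs hy
  have hpos : 0 < ‖horiz n d y‖ ^ 2 - ‖vert n d y‖ ^ 2 := by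
    nlinarith [norm_nonneg (vert n d y)]
  have hY : 0 < ‖horiz n d (upsInv n d y)‖ := norm_horiz_upsInv hH ▸ Real.sqrt_pos.2 hpos
  refine (mem_cone_iff_sq hs).2 ⟨ne_zero_of_norm_horiz_pos hY, ?_⟩
  rw [vert_upsInv hH, norm_horiz_upsInv hH, Real.sq_sqrt hpos.le]
  linarith

lemma image_ups_cone (hs : 0 ≤ s) :
    ups n d '' cone n d s = cone n d (s * (1 + s ^ 2) ^ (-(1 : ℝ) / 2)) :=
  Set.Subset.antisymm (Set.image_subset_iff.2 fun _ hx => ups_mem_cone hs hx) fun y hy =>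
    ⟨upsInv n d y, upsInv_mem_cone hs hy, ups_upsInv (norm_vert_lt_of_mem_cone_rpow hs hy)⟩

end Image

section Lipschitz

variable {n d : ℕ} {x y : EuclideanSpace ℝ (Fin d)}

lemma norm_smul_horiz_add_vert_sub_le {gx gy M K : ℝ} (hx : 0 < ‖horiz n d x‖)
    (hy : 0 < ‖horiz n d y‖) (hgx : 0 ≤ gx) (hM : gx ≤ M * ‖horiz n d x‖)
    (hg : |gx - gy| ≤ K * ‖x - y‖) :
    ‖((gx / ‖horiz n d x‖) • horiz n d x + vert n d x) -
        ((gy / ‖horiz n d y‖) • horiz n d y + vert n d y)‖ ≤ (2 * M + K + 1) * ‖x - y‖ := by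
  have hcoeff : |gx / ‖horiz n d x‖| ≤ M := by
    rw [abs_of_nonneg (by positivity)]; exact (div_le_iff₀ hx).2 hM
  have hH : |‖horiz n d x‖ - ‖horiz n d y‖| ≤ ‖x - y‖ :=
    (abs_norm_sub_norm_le _ _).trans (norm_horiz_sub_le x y)
  calc _ ≤ |gx / ‖horiz n d x‖| * ‖horiz n d x - horiz n d y‖
          + |gx / ‖horiz n d x‖ - gy / ‖horiz n d y‖| * ‖horiz n d y‖
          + ‖vert n d x - vert n d y‖ := norm_smul_add_sub_smul_add_le _ _ _ _ _ _
    _ ≤ M * ‖x - y‖ + (M * ‖x - y‖ + K * ‖x - y‖) + ‖x - y‖ := by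
        have hM0 : 0 ≤ M := nonneg_of_mul_nonneg_left (hgx.trans hM) hx
        gcongr
        · exact norm_horiz_sub_le x y
        · exact (abs_div_sub_div_mul_le hx hy hgx hM).trans (by gcongr)
        · exact norm_vert_sub_le x y
    _ = (2 * M + K + 1) * ‖x - y‖ := by ring

lemma norm_ups_sub_ups_le {s : ℝ} (hx : x ∈ cone n d s) (hy : y ∈ cone n d s) :
    ‖ups n d x - ups n d y‖ ≤ (2 * (1 + s) + 2) * ‖x - y‖ := by
  have hHx := norm_horiz_pos_of_mem_cone hx
  have hnorm : ‖x‖ ≤ (1 + s) * ‖horiz n d x‖ := by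
    calc ‖x‖ = ‖horiz n d x + vert n d x‖ := by rw [horiz_add_vert]
      _ ≤ ‖horiz n d x‖ + ‖vert n d x‖ := norm_add_le _ _
      _ ≤ (1 + s) * ‖horiz n d x‖ := by linarith [hx.2]
  have h := norm_smul_horiz_add_vert_sub_le hHx (norm_horiz_pos_of_mem_cone hy) (norm_nonneg x)
    hnorm (K := 1) (by rw [one_mul]; exact abs_norm_sub_norm_le x y)
  rwa [show 2 * (1 + s) + 1 + 1 = 2 * (1 + s) + 2 by ring] at h

lemma norm_upsInv_sub_upsInv_le {c : ℝ} (hc : 0 ≤ c) (hc2 : 2 * c ^ 2 ≤ 1)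
    (hx : x ∈ cone n d c) (hy : y ∈ cone n d c) :
    ‖upsInv n d x - upsInv n d y‖ ≤ 7 * ‖x - y‖ := by
  have hHx := norm_horiz_pos_of_mem_cone hx
  have hHy := norm_horiz_pos_of_mem_cone hy
  have hx2 : 2 * ‖vert n d x‖ ^ 2 ≤ ‖horiz n d x‖ ^ 2 := by
    nlinarith [((mem_cone_iff_sq hc).1 hx).2]
  have hy2 : 2 * ‖vert n d y‖ ^ 2 ≤ ‖horiz n d y‖ ^ 2 := by
    nlinarith [((mem_cone_iff_sq hc).1 hy).2]
  have hM : √(‖horiz n d x‖ ^ 2 - ‖vert n d x‖ ^ 2) ≤ 1 * ‖horiz n d x‖ := by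
    rw [one_mul, Real.sqrt_le_left hHx.le]
    nlinarith [norm_nonneg (vert n d x)]
  have h := norm_smul_horiz_add_vert_sub_le hHx hHy (Real.sqrt_nonneg _) hM
    (abs_sqrt_sq_sub_sq_sub_le hHx hHy (norm_nonneg _) (norm_nonneg _) hx2 hy2
      ((abs_norm_sub_norm_le _ _).trans (norm_horiz_sub_le x y))
      ((abs_norm_sub_norm_le _ _).trans (norm_vert_sub_le x y)))
  rw [← upsInv_eq hHx, ← upsInv_eq hHy] at h
  linarith

end Lipschitz

theorem stmt5_general (n d : ℕ) (s : ℝ) (hs0 : 0 < s) (hs1 : s < 1) :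
    ∃ C > 0,
      (ups n d '' {x : EuclideanSpace ℝ (Fin d) | x ≠ 0 ∧ ‖vert n d x‖ ≤ s * ‖horiz n d x‖}
        = {x : EuclideanSpace ℝ (Fin d) |
            x ≠ 0 ∧ ‖vert n d x‖ ≤ s * (1 + s ^ 2) ^ (-(1 : ℝ) / 2) * ‖horiz n d x‖}) ∧
      (∀ x : EuclideanSpace ℝ (Fin d), x ≠ 0 → ‖vert n d x‖ ≤ s * ‖horiz n d x‖ →
        upsInv n d (ups n d x) = x) ∧
      (∀ y : EuclideanSpace ℝ (Fin d), y ≠ 0 →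
        ‖vert n d y‖ ≤ s * (1 + s ^ 2) ^ (-(1 : ℝ) / 2) * ‖horiz n d y‖ →
        ups n d (upsInv n d y) = y) ∧
      (∀ x y : EuclideanSpace ℝ (Fin d), x ≠ 0 → ‖vert n d x‖ ≤ s * ‖horiz n d x‖ →
        y ≠ 0 → ‖vert n d y‖ ≤ s * ‖horiz n d y‖ →
        ‖ups n d x - ups n d y‖ ≤ C * ‖x - y‖ ∧ ‖x - y‖ ≤ C * ‖ups n d x - ups n d y‖) := by
  have hs : 0 ≤ s := hs0.le
  have hslope : 2 * (s * (1 + s ^ 2) ^ (-(1 : ℝ) / 2)) ^ 2 ≤ 1 := by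
    rw [sq_mul_one_add_sq_rpow_neg_half, mul_div_assoc', div_le_one (by positivity)]
    nlinarith
  refine ⟨7, by norm_num, image_ups_cone hs,
    fun x hx hxs => upsInv_ups (norm_horiz_pos_of_mem_cone ⟨hx, hxs⟩),
    fun y hy hys => ups_upsInv (norm_vert_lt_of_mem_cone_rpow hs ⟨hy, hys⟩),
    fun x y hx hxs hy hys => ⟨?_, ?_⟩⟩
  · exact (norm_ups_sub_ups_le ⟨hx, hxs⟩ ⟨hy, hys⟩).trans (by gcongr; linarith)
  · have h := norm_upsInv_sub_upsInv_le (by positivity) hslope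
      (ups_mem_cone hs ⟨hx, hxs⟩) (ups_mem_cone hs ⟨hy, hys⟩)
    rwa [upsInv_ups (norm_horiz_pos_of_mem_cone ⟨hx, hxs⟩),
      upsInv_ups (norm_horiz_pos_of_mem_cone ⟨hy, hys⟩)] at h

/-- For `1 ≤ n < d` and `0 < s < 1`, the map `Υ` is a bilipschitz
homeomorphism from the cone `L = {x ≠ 0 : |x_V| ≤ s|x_H|}` onto the cone
`L' = {x ≠ 0 : |x_V| ≤ s(1+s²)^{-1/2}|x_H|}`, with inverse `Υ⁻¹` as above, the bilipschitz
constant depending only on `n`, `d` and `s`. -/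
theorem stmt5 (n d : ℕ) (hn : 1 ≤ n) (hnd : n < d) (s : ℝ) (hs0 : 0 < s) (hs1 : s < 1) :
    ∃ C > 0,
      (ups n d '' {x : EuclideanSpace ℝ (Fin d) | x ≠ 0 ∧ ‖vert n d x‖ ≤ s * ‖horiz n d x‖}
        = {x : EuclideanSpace ℝ (Fin d) |
            x ≠ 0 ∧ ‖vert n d x‖ ≤ s * (1 + s ^ 2) ^ (-(1 : ℝ) / 2) * ‖horiz n d x‖}) ∧
      (∀ x : EuclideanSpace ℝ (Fin d), x ≠ 0 → ‖vert n d x‖ ≤ s * ‖horiz n d x‖ →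
        upsInv n d (ups n d x) = x) ∧
      (∀ y : EuclideanSpace ℝ (Fin d), y ≠ 0 →
        ‖vert n d y‖ ≤ s * (1 + s ^ 2) ^ (-(1 : ℝ) / 2) * ‖horiz n d y‖ →
        ups n d (upsInv n d y) = y) ∧
      (∀ x y : EuclideanSpace ℝ (Fin d), x ≠ 0 → ‖vert n d x‖ ≤ s * ‖horiz n d x‖ →
        y ≠ 0 → ‖vert n d y‖ ≤ s * ‖horiz n d y‖ →
        ‖ups n d x - ups n d y‖ ≤ C * ‖x - y‖ ∧ ‖x - y‖ ≤ C * ‖ups n d x - ups n d y‖) :=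
  stmt5_general n d s hs0 hs1
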